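/- Let a > 0 and let k : [0, ∞) → ℝ be continuous with k(s) ≤ −a² for all s, let F be the solution of F'' + kF = 0 with F(0) = 0, F'(0) = 1, and set G(s) = ∫₀ˢ F(t) dt. Then G(s) ≤ F(s)/a for all s ≥ 0. -/

import Mathlib

open Set Real Filter Topology intervalIntegral

/-!
Since `F'' = -k F` with `-k ≥ 0`, `(F F')' = F'² - k F² ≥ 0`, so `F²` is nondecreasing; as `F` starts
out positive, it can never return to zero, so `F ≥ 0`. Then `F'' ≥ a² F`, which makes
`e^{a s} (F' - a F)` nondecreasing, so `F' ≥ a F`; integrating gives `a G(s) ≤ F(s) - F(0) = F(s)`.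
-/

lemma monotoneOn_Ici_of_hasDerivWithinAt_nonneg {f f' : ℝ → ℝ} {c : ℝ}
    (hf : ∀ x ∈ Ici c, HasDerivWithinAt f (f' x) (Ici c) x) (hf' : ∀ x ∈ Ioi c, 0 ≤ f' x) :
    MonotoneOn f (Ici c) := by
  refine monotoneOn_of_hasDerivWithinAt_nonneg (convex_Ici c) (f' := f')
    (fun x hx => (hf x hx).continuousWithinAt) (fun x hx => ?_) (fun x hx => ?_)
  · rw [interior_Ici] at hx ⊢
    exact (hf x (Ioi_subset_Ici_self hx)).mono Ioi_subset_Ici_self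
  · exact hf' x (interior_Ici (a := c) ▸ hx)

lemma eventually_nhdsGT_pos_of_hasDerivWithinAt {f : ℝ → ℝ} {f' x : ℝ}
    (hf : HasDerivWithinAt f f' (Ici x) x) (hfx : f x = 0) (hf' : 0 < f') :
    ∀ᶠ y in 𝓝[>] x, 0 < f y := by
  have hslope : Tendsto (slope f x) (𝓝[>] x) (𝓝 f') :=
    (hasDerivWithinAt_iff_tendsto_slope' (lt_irrefl x)).1 (hasDerivWithinAt_Ioi_iff_Ici.2 hf)
  filter_upwards [hslope.eventually (eventually_gt_nhds hf'), self_mem_nhdsWithin]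
    with y hy (hxy : x < y)
  rw [slope_def_field, hfx, sub_zero] at hy
  exact (div_pos_iff_of_pos_right (sub_pos.2 hxy)).1 hy

structure IsJacobiSolution (k F F' F'' : ℝ → ℝ) : Prop where
  hasDerivWithinAt : ∀ s ∈ Ici (0 : ℝ), HasDerivWithinAt F (F' s) (Ici 0) s
  hasDerivWithinAt_deriv : ∀ s ∈ Ici (0 : ℝ), HasDerivWithinAt F' (F'' s) (Ici 0) s
  ode : ∀ s ∈ Ici (0 : ℝ), F'' s + k s * F s = 0

namespace IsJacobiSolution

variable {k F F' F'' : ℝ → ℝ}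

lemma continuousOn (h : IsJacobiSolution k F F' F'') : ContinuousOn F (Ici 0) :=
  fun s hs => (h.hasDerivWithinAt s hs).continuousWithinAt

lemma continuousOn_deriv (h : IsJacobiSolution k F F' F'') : ContinuousOn F' (Ici 0) :=
  fun s hs => (h.hasDerivWithinAt_deriv s hs).continuousWithinAt

lemma mul_deriv_nonneg (h : IsJacobiSolution k F F' F'')
    (hk : ∀ s ∈ Ici (0 : ℝ), k s ≤ 0) (hF0 : F 0 = 0) :
    ∀ s ∈ Ici (0 : ℝ), 0 ≤ F s * F' s := by
  have hmono : MonotoneOn (fun s => F s * F' s) (Ici 0) := by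
    refine monotoneOn_Ici_of_hasDerivWithinAt_nonneg
      (fun s hs => (h.hasDerivWithinAt s hs).mul (h.hasDerivWithinAt_deriv s hs)) fun s hs => ?_
    have hFF'' : F s * F'' s = -k s * (F s * F s) := by
      linear_combination F s * h.ode s (Ioi_subset_Ici_self hs)
    rw [hFF'']
    nlinarith [mul_self_nonneg (F' s), mul_self_nonneg (F s), hk s (Ioi_subset_Ici_self hs)]
  intro s hs
  simpa [hF0] using hmono self_mem_Ici hs hs

lemma mul_self_monotoneOn (h : IsJacobiSolution k F F' F'')
    (hk : ∀ s ∈ Ici (0 : ℝ), k s ≤ 0) (hF0 : F 0 = 0) :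
    MonotoneOn (fun s => F s * F s) (Ici 0) :=
  monotoneOn_Ici_of_hasDerivWithinAt_nonneg
    (fun s hs => (h.hasDerivWithinAt s hs).mul (h.hasDerivWithinAt s hs)) fun s hs => by
      have := h.mul_deriv_nonneg hk hF0 s (Ioi_subset_Ici_self hs)
      linarith

lemma nonneg (h : IsJacobiSolution k F F' F'')
    (hk : ∀ s ∈ Ici (0 : ℝ), k s ≤ 0) (hF0 : F 0 = 0) (hF'0 : 0 < F' 0) :
    ∀ s ∈ Ici (0 : ℝ), 0 ≤ F s := by
  intro t ht
  by_contra! hFt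
  have htpos : 0 < t := lt_of_le_of_ne ht fun h0 => by simp [← h0, hF0] at hFt
  obtain ⟨s, hFs, hs0, hst⟩ :=
    ((eventually_nhdsGT_pos_of_hasDerivWithinAt (h.hasDerivWithinAt 0 self_mem_Ici) hF0
      hF'0).and (Ioo_mem_nhdsGT htpos)).exists
  obtain ⟨r, ⟨hsr, -⟩, hFr⟩ :=
    intermediate_value_Icc' hst.le (h.continuousOn.mono (Icc_subset_Ici_iff hst.le |>.2 hs0.le))
      ⟨hFt.le, hFs.le⟩
  have hsq : F s * F s ≤ F r * F r :=
    h.mul_self_monotoneOn hk hF0 hs0.le (hs0.le.trans hsr) hsr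
  rw [hFr, mul_zero] at hsq
  nlinarith

lemma mul_le_deriv (h : IsJacobiSolution k F F' F'') {a : ℝ}
    (hk : ∀ s ∈ Ici (0 : ℝ), k s ≤ -a ^ 2) (hF0 : F 0 = 0) (hF'0 : 0 < F' 0) :
    ∀ s ∈ Ici (0 : ℝ), a * F s ≤ F' s := by
  have hFnn := h.nonneg (fun s hs => (hk s hs).trans (neg_nonpos.2 (sq_nonneg a))) hF0 hF'0
  -- `(e^{a s} (F' - a F))' = e^{a s} (F'' - a² F) = e^{a s} (-k - a²) F ≥ 0`
  have hmono : MonotoneOn (fun s => exp (a * s) * (F' s - a * F s)) (Ici 0) := by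
    refine monotoneOn_Ici_of_hasDerivWithinAt_nonneg (f' := fun s =>
        exp (a * s) * a * (F' s - a * F s) + exp (a * s) * (F'' s - a * F' s))
      (fun s hs => ?_) fun s hs => ?_
    · have hexp : HasDerivWithinAt (fun s => exp (a * s)) (exp (a * s) * a) (Ici 0) s := by
        simpa using ((hasDerivAt_id s).const_mul a).exp.hasDerivWithinAt
      exact hexp.mul ((h.hasDerivWithinAt_deriv s hs).sub
        ((h.hasDerivWithinAt s hs).const_mul a))
    · have hode := h.ode s (Ioi_subset_Ici_self hs)
      have hF'' : a ^ 2 * F s ≤ F'' s := by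
        nlinarith [hk s (Ioi_subset_Ici_self hs), hFnn s (Ioi_subset_Ici_self hs)]
      have := exp_pos (a * s)
      nlinarith
  intro s hs
  have hQ := hmono self_mem_Ici hs hs
  simp only [mul_zero, exp_zero, hF0, one_mul, sub_zero] at hQ
  nlinarith [exp_pos (a * s)]

lemma mul_integral_le (h : IsJacobiSolution k F F' F'') {a : ℝ}
    (hk : ∀ s ∈ Ici (0 : ℝ), k s ≤ -a ^ 2) (hF0 : F 0 = 0) (hF'0 : 0 < F' 0) :
    ∀ s ∈ Ici (0 : ℝ), a * ∫ t in (0 : ℝ)..s, F t ≤ F s := by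
  intro s (hs : 0 ≤ s)
  have hFc : ContinuousOn F (Icc 0 s) := h.continuousOn.mono Icc_subset_Ici_self
  have hF'c : ContinuousOn F' (Icc 0 s) := h.continuousOn_deriv.mono Icc_subset_Ici_self
  have hFTC : ∫ t in (0 : ℝ)..s, F' t = F s - F 0 :=
    integral_eq_sub_of_hasDerivAt_of_le hs hFc
      (fun x hx => (h.hasDerivWithinAt x hx.1.le).hasDerivAt (Ici_mem_nhds hx.1))
      (hF'c.intervalIntegrable_of_Icc hs)
  calc a * ∫ t in (0 : ℝ)..s, F t = ∫ t in (0 : ℝ)..s, a * F t := (integral_const_mul a F).symm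
    _ ≤ ∫ t in (0 : ℝ)..s, F' t :=
      integral_mono_on hs ((continuousOn_const.mul hFc).intervalIntegrable_of_Icc hs)
        (hF'c.intervalIntegrable_of_Icc hs) fun x hx => h.mul_le_deriv hk hF0 hF'0 x hx.1
    _ = F s := by rw [hFTC, hF0, sub_zero]

end IsJacobiSolution

theorem stmt_15_general (a : ℝ) (ha : 0 < a) (k F F' F'' : ℝ → ℝ)
    (hk_le : ∀ s ∈ Set.Ici (0 : ℝ), k s ≤ -a ^ 2)
    (hF' : ∀ s ∈ Set.Ici (0 : ℝ), HasDerivWithinAt F (F' s) (Set.Ici 0) s)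
    (hF'' : ∀ s ∈ Set.Ici (0 : ℝ), HasDerivWithinAt F' (F'' s) (Set.Ici 0) s)
    (hODE : ∀ s ∈ Set.Ici (0 : ℝ), F'' s + k s * F s = 0)
    (hF0 : F 0 = 0) (hF'0 : F' 0 = 1)
    (G : ℝ → ℝ) (hG : ∀ s, G s = ∫ t in (0 : ℝ)..s, F t) :
    ∀ s ∈ Set.Ici (0 : ℝ), G s ≤ F s / a := by
  intro s hs
  have hJ : IsJacobiSolution k F F' F'' := ⟨hF', hF'', hODE⟩
  rw [hG, le_div_iff₀ ha, mul_comm]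
  exact hJ.mul_integral_le hk_le hF0 (hF'0 ▸ one_pos) s hs

/-- Inequality (10) in the paper: if `k ≤ -a² < 0` and `F'' + kF = 0`, `F(0)=0`,
`F'(0)=1`, with `G(s) = ∫₀ˢ F`, then `G(s) ≤ F(s)/a` for all `s ≥ 0`. -/
theorem stmt_15 (a : ℝ) (ha : 0 < a) (k F F' F'' : ℝ → ℝ)
    (hk_cont : ContinuousOn k (Set.Ici 0))
    (hk_le : ∀ s ∈ Set.Ici (0 : ℝ), k s ≤ -a ^ 2)
    (hF' : ∀ s ∈ Set.Ici (0 : ℝ), HasDerivWithinAt F (F' s) (Set.Ici 0) s)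
    (hF'' : ∀ s ∈ Set.Ici (0 : ℝ), HasDerivWithinAt F' (F'' s) (Set.Ici 0) s)
    (hF''_cont : ContinuousOn F'' (Set.Ici 0))
    (hODE : ∀ s ∈ Set.Ici (0 : ℝ), F'' s + k s * F s = 0)
    (hF0 : F 0 = 0) (hF'0 : F' 0 = 1)
    (G : ℝ → ℝ) (hG : ∀ s, G s = ∫ t in (0 : ℝ)..s, F t) :
    ∀ s ∈ Set.Ici (0 : ℝ), G s ≤ F s / a :=
  stmt_15_general a ha k F F' F'' hk_le hF' hF'' hODE hF0 hF'0 G hG
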